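/- Let Ω = {(1/2,1/2), (1/2,1/4)} with common prior assigning probability p < 1/2 to (1/2,1/2), where player 1's discount factor is 1/2 in both states and player 2's is 1/2 or 1/4 respectively, and player 2 knows the state while player 1 does not. Then the only pair of cooperation events is (∅, ∅): since Λ_1 ∩ Λ_2 = {(1/2,1/2)} and P_1({(1/2,1/2)} | ω) = p < 1/2 = f_1(1/2), player 1's iterated f-belief in (Λ_1, Λ_2) is empty, hence B_1(D(Λ)) = B_2(D(Λ)) = ∅. -/
import Mathlib


open Classical

/-- The cooperation threshold `f(l) = (1-l)/(2l)`. -/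
noncomputable def fThresh (l : ℝ) : ℝ := (1 - l) / (2 * l)

/-- Player 1's discount factor: `1/2` in both states. -/
noncomputable def lam1 : Bool → ℝ := fun _ => 1/2

/-- Player 2's discount factor: `1/2` in state `true = (1/2,1/2)`,
`1/4` in state `false = (1/2,1/4)`. -/
noncomputable def lam2 : Bool → ℝ := fun b => if b then 1/2 else 1/4

/-- Player 1's belief: probability `p` on state `(1/2,1/2)`, `1-p` on `(1/2,1/4)`;
player 1 cannot distinguish the states. -/
noncomputable def P1 (p : ℝ) (_ : Bool) (A : Set Bool) : ℝ :=
  (if true ∈ A then p else 0) + (if false ∈ A then 1 - p else 0)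

/-- Player 2 knows the state. -/
noncomputable def P2 (ω : Bool) (A : Set Bool) : ℝ := if ω ∈ A then 1 else 0

/-- The `f`-belief operator for a real-valued belief function. -/
def fBelief (P : Bool → Set Bool → ℝ) (f : Bool → ℝ) (A : Set Bool) : Set Bool :=
  {ω | f ω ≤ P ω A}

/-- The common `f`-belief iteration. -/
def commonD (B1 B2 : Set Bool → Set Bool) (C : Set Bool) : ℕ → Set Bool
  | 0 => C
  | n + 1 => B1 (commonD B1 B2 C n) ∩ B2 (commonD B1 B2 C n)

/-- `(K₁, K₂)` is a pair of cooperation events. -/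
def IsCoopPair (p : ℝ) (K1 K2 : Set Bool) : Prop :=
  K1 ⊆ {ω | 1/3 ≤ lam1 ω} ∧ K2 ⊆ {ω | 1/3 ≤ lam2 ω} ∧
  (∀ ω ∈ K1, fThresh (lam1 ω) ≤ P1 p ω K2) ∧
  (∀ ω ∈ K2, fThresh (lam2 ω) ≤ P2 ω K1) ∧
  (∀ ω ∉ K1, P1 p ω K2 ≤ fThresh (lam1 ω)) ∧
  (∀ ω ∉ K2, P2 ω K1 ≤ fThresh (lam2 ω))

/-- In the two-state example `Ω = {(1/2,1/2), (1/2,1/4)}` with prior probability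
`p < 1/2` on `(1/2,1/2)`, the only pair of cooperation events is `(∅, ∅)`; in particular
`B₁(D(Λ)) = B₂(D(Λ)) = ∅` for `Λ = Λ₁ ∩ Λ₂ = {(1/2,1/2)}`. -/
theorem two_state_no_cooperation (p : ℝ) (hp0 : 0 ≤ p) (hp : p < 1/2) :
    (∀ K1 K2 : Set Bool, IsCoopPair p K1 K2 → K1 = ∅ ∧ K2 = ∅) ∧
    fBelief (P1 p) (fun ω => fThresh (lam1 ω))
      (⋂ n, commonD (fBelief (P1 p) (fun ω => fThresh (lam1 ω)))
        (fBelief P2 (fun ω => fThresh (lam2 ω)))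
        ({ω | 1/3 ≤ lam1 ω} ∩ {ω | 1/3 ≤ lam2 ω}) (n + 1)) = ∅ ∧
    fBelief P2 (fun ω => fThresh (lam2 ω))
      (⋂ n, commonD (fBelief (P1 p) (fun ω => fThresh (lam1 ω)))
        (fBelief P2 (fun ω => fThresh (lam2 ω)))
        ({ω | 1/3 ≤ lam1 ω} ∩ {ω | 1/3 ≤ lam2 ω}) (n + 1)) = ∅ := by
  have hIempty : (⋂ n, commonD (fBelief (P1 p) (fun ω => fThresh (lam1 ω)))
        (fBelief P2 (fun ω => fThresh (lam2 ω)))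
        ({ω | 1/3 ≤ lam1 ω} ∩ {ω | 1/3 ≤ lam2 ω}) (n + 1)) = ∅ := by
    apply Set.eq_empty_of_subset_empty
    refine (Set.iInter_subset _ 0).trans ?_
    intro ω hω
    have h1 : ω ∈ fBelief (P1 p) (fun ω => fThresh (lam1 ω))
        ({ω | 1/3 ≤ lam1 ω} ∩ {ω | 1/3 ≤ lam2 ω}) := hω.1
    have hΛ : ({ω | 1/3 ≤ lam1 ω} ∩ {ω | 1/3 ≤ lam2 ω} : Set Bool) = {true} := by
      ext b; cases b <;> simp [lam1, lam2] <;> norm_num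
    rw [hΛ] at h1
    have : fThresh (lam1 ω) ≤ P1 p ω {true} := h1
    simp [fThresh, lam1, P1] at this
    norm_num at this
    linarith
  have hB1 : ∀ A : Set Bool, A = ∅ →
      fBelief (P1 p) (fun ω => fThresh (lam1 ω)) A = ∅ := by
    intro A hA; subst hA
    ext ω
    simp only [fBelief, Set.mem_setOf_eq, Set.mem_empty_iff_false, iff_false, not_le]
    simp [P1, fThresh, lam1]; norm_num
  have hB2 : ∀ A : Set Bool, A = ∅ →
      fBelief P2 (fun ω => fThresh (lam2 ω)) A = ∅ := by
    intro A hA; subst hA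
    ext ω
    simp only [fBelief, Set.mem_setOf_eq, Set.mem_empty_iff_false, iff_false, not_le]
    cases ω <;> simp [P2, fThresh, lam2] <;> norm_num
  refine ⟨?_, hB1 _ hIempty, hB2 _ hIempty⟩
  intro K1 K2 ⟨h1, h2, h3, h4, _, _⟩
  have hK2 : K2 = ∅ := by
    by_contra hne
    obtain ⟨ω, hω⟩ := Set.nonempty_iff_ne_empty.mpr hne
    have hωt : ω = true := by
      have := h2 hω
      cases ω with
      | true => rfl
      | false => simp [lam2] at this; norm_num at this
    subst hωt
    -- true ∈ K2, so fThresh (1/2) = 1/2 ≤ P2 true K1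
    have h4' := h4 true hω
    have htK1 : true ∈ K1 := by
      by_contra hK1
      simp [P2, hK1, fThresh, lam2] at h4'
      norm_num at h4'
    have h3' := h3 true htK1
    have hsub : K2 ⊆ {true} := by
      intro b hb
      have := h2 hb
      cases b with
      | true => rfl
      | false => simp [lam2] at this; norm_num at this
    have hP1le : P1 p true K2 ≤ p := by
      have hf : false ∉ K2 := fun h => by simpa using hsub h
      by_cases ht : true ∈ K2 <;> simp [P1, ht, hf] <;> linarith
    have : fThresh (lam1 true) = 1/2 := by simp [fThresh, lam1]; norm_num
    rw [this] at h3'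
    linarith
  subst hK2
  refine ⟨?_, rfl⟩
  by_contra hne
  obtain ⟨ω, hω⟩ := Set.nonempty_iff_ne_empty.mpr (fun h => hne (h ▸ rfl) : K1 ≠ ∅)
  have h3' := h3 ω hω
  have : fThresh (lam1 ω) = 1/2 := by simp [fThresh, lam1]; norm_num
  rw [this] at h3'
  simp [P1] at h3'
  norm_num at h3'
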